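/- arXiv:2601.22083 — 2 statements merged into one kernel-verified Lean document; each statement's English description precedes it below -/
import Mathlib

section
/- If p = q are equal probability measures, then for every bounded measurable function C : 𝓗 → ℝ, E_{h∼p}[log σ(C(h) − m)] + E_{h∼p}[log σ(m − C(h))] ≤ −log 4, with equality when C is constant, where m = E_{h∼p}[C(h)]; hence D_Ra(p‖p) = 0. -/
open MeasureTheory

noncomputable def sigm (x : ℝ) : ℝ := 1 / (1 + Real.exp (-x))

lemma log_sigm_eq (x : ℝ) : Real.log (sigm x) = -Real.log (1 + Real.exp (-x)) := by
  rw [sigm, one_div, Real.log_inv]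

lemma log_sigm_zero : Real.log (sigm 0) = -Real.log 2 := by
  rw [log_sigm_eq]; norm_num

lemma log_four : Real.log 4 = 2 * Real.log 2 := by
  rw [show (4:ℝ) = 2^2 by norm_num, Real.log_pow]; push_cast; ring

lemma log_sigm_add_le (x : ℝ) :
    Real.log (sigm x) + Real.log (sigm (-x)) ≤ -Real.log 4 := by
  have hx := Real.exp_pos x
  have hx' := Real.exp_pos (-x)
  have h1 : (0:ℝ) < 1 + Real.exp (-x) := by linarith
  have h2 : (0:ℝ) < 1 + Real.exp x := by linarith
  rw [log_sigm_eq, log_sigm_eq, neg_neg]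
  have key : Real.log 4 ≤ Real.log (1 + Real.exp (-x)) + Real.log (1 + Real.exp x) := by
    rw [← Real.log_mul (ne_of_gt h1) (ne_of_gt h2)]
    apply Real.log_le_log (by norm_num)
    have hprod : Real.exp (-x) * Real.exp x = 1 := by
      rw [← Real.exp_add]; simp
    nlinarith [sq_nonneg (Real.exp x - 1), hx]
  linarith

lemma log_sigm_bound {t K : ℝ} (ht : |t| ≤ K) :
    |Real.log (sigm t)| ≤ Real.log (1 + Real.exp K) := by
  have hx' := Real.exp_pos (-t)
  have h1 : (0:ℝ) < 1 + Real.exp (-t) := by linarith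
  rw [log_sigm_eq, abs_neg]
  rw [abs_of_nonneg (Real.log_nonneg (by linarith))]
  apply Real.log_le_log h1
  have : Real.exp (-t) ≤ Real.exp K := Real.exp_le_exp.2 (by
    have := abs_le.1 ht; linarith [this.1])
  linarith

lemma measurable_log_sigm {H : Type*} [MeasurableSpace H] {C : H → ℝ}
    (hC : Measurable C) (m : ℝ) :
    Measurable (fun h => Real.log (sigm (C h - m))) := by
  apply Real.measurable_log.comp
  unfold sigm
  fun_prop

lemma measurable_log_sigm' {H : Type*} [MeasurableSpace H] {C : H → ℝ}
    (hC : Measurable C) (m : ℝ) :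
    Measurable (fun h => Real.log (sigm (m - C h))) := by
  apply Real.measurable_log.comp
  unfold sigm
  fun_prop

lemma integrable_log_sigm {H : Type*} [MeasurableSpace H] (p : Measure H)
    [IsProbabilityMeasure p] {f : H → ℝ}
    (hf : Measurable (fun h => Real.log (sigm (f h))))
    {K : ℝ} (hK : ∀ h, |f h| ≤ K) :
    Integrable (fun h => Real.log (sigm (f h))) p := by
  apply (integrable_const (Real.log (1 + Real.exp K))).mono'
    hf.aestronglyMeasurable
  exact ae_of_all _ (fun h => by
    simpa [Real.norm_eq_abs] using log_sigm_bound (hK h))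

theorem raGAN_eq_dist_zero
    {H : Type*} [MeasurableSpace H]
    (p : Measure H) [IsProbabilityMeasure p] :
    (∀ C : H → ℝ, Measurable C → (∃ M : ℝ, ∀ h, |C h| ≤ M) →
      (∫ h, Real.log (sigm (C h - ∫ h', C h' ∂p)) ∂p) +
        (∫ h, Real.log (sigm ((∫ h', C h' ∂p) - C h)) ∂p)
        ≤ -Real.log 4) ∧
    (∀ c : ℝ,
      (∫ h, Real.log (sigm ((fun _ : H => c) h - ∫ _h', c ∂p)) ∂p) +
        (∫ h, Real.log (sigm ((∫ _h', c ∂p) - (fun _ : H => c) h)) ∂p)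
        = -Real.log 4) ∧
    Real.log 4 +
      sSup {r : ℝ | ∃ C : H → ℝ, Measurable C ∧ (∃ M : ℝ, ∀ h, |C h| ≤ M) ∧
        r = (∫ h, Real.log (sigm (C h - ∫ h', C h' ∂p)) ∂p) +
            (∫ h, Real.log (sigm ((∫ h', C h' ∂p) - C h)) ∂p)} = 0 := by
  have part1 : ∀ C : H → ℝ, Measurable C → (∃ M : ℝ, ∀ h, |C h| ≤ M) →
      (∫ h, Real.log (sigm (C h - ∫ h', C h' ∂p)) ∂p) +
        (∫ h, Real.log (sigm ((∫ h', C h' ∂p) - C h)) ∂p)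
        ≤ -Real.log 4 := by
    intro C hC ⟨M, hM⟩
    set m := ∫ h', C h' ∂p with hm
    have hb1 : ∀ h, |C h - m| ≤ M + |m| := fun h => by
      calc |C h - m| ≤ |C h| + |m| := abs_sub (C h) m
        _ ≤ M + |m| := by linarith [hM h]
    have hb2 : ∀ h, |m - C h| ≤ M + |m| := fun h => by
      rw [abs_sub_comm]; exact hb1 h
    have int1 : Integrable (fun h => Real.log (sigm (C h - m))) p :=
      integrable_log_sigm p (measurable_log_sigm hC m) hb1
    have int2 : Integrable (fun h => Real.log (sigm (m - C h))) p :=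
      integrable_log_sigm p (measurable_log_sigm' hC m) hb2
    rw [← integral_add int1 int2]
    calc (∫ h, (Real.log (sigm (C h - m)) + Real.log (sigm (m - C h))) ∂p)
        ≤ ∫ _h, -Real.log 4 ∂p := by
          apply integral_mono (int1.add int2) (integrable_const _)
          intro h
          have := log_sigm_add_le (C h - m)
          simpa [neg_sub] using this
      _ = -Real.log 4 := by simp
  have part2 : ∀ c : ℝ,
      (∫ h, Real.log (sigm ((fun _ : H => c) h - ∫ _h', c ∂p)) ∂p) +
        (∫ h, Real.log (sigm ((∫ _h', c ∂p) - (fun _ : H => c) h)) ∂p)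
        = -Real.log 4 := by
    intro c
    have hc : (∫ _h', c ∂p) = c := by simp
    rw [hc]
    simp only [sub_self]
    rw [integral_const]
    simp [log_sigm_zero, log_four]
    ring
  refine ⟨part1, part2, ?_⟩
  have hmem : -Real.log 4 ∈ {r : ℝ | ∃ C : H → ℝ, Measurable C ∧ (∃ M : ℝ, ∀ h, |C h| ≤ M) ∧
      r = (∫ h, Real.log (sigm (C h - ∫ h', C h' ∂p)) ∂p) +
          (∫ h, Real.log (sigm ((∫ h', C h' ∂p) - C h)) ∂p)} := by
    refine ⟨fun _ => (0:ℝ), measurable_const, ⟨0, fun h => by simp⟩, ?_⟩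
    exact (part2 0).symm
  have hub : ∀ r ∈ {r : ℝ | ∃ C : H → ℝ, Measurable C ∧ (∃ M : ℝ, ∀ h, |C h| ≤ M) ∧
      r = (∫ h, Real.log (sigm (C h - ∫ h', C h' ∂p)) ∂p) +
          (∫ h, Real.log (sigm ((∫ h', C h' ∂p) - C h)) ∂p)}, r ≤ -Real.log 4 := by
    rintro r ⟨C, hC, hM, rfl⟩
    exact part1 C hC hM
  have : sSup {r : ℝ | ∃ C : H → ℝ, Measurable C ∧ (∃ M : ℝ, ∀ h, |C h| ≤ M) ∧
      r = (∫ h, Real.log (sigm (C h - ∫ h', C h' ∂p)) ∂p) +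
          (∫ h, Real.log (sigm ((∫ h', C h' ∂p) - C h)) ∂p)} = -Real.log 4 :=
    le_antisymm (csSup_le ⟨_, hmem⟩ hub) (le_csSup ⟨_, hub⟩ hmem)
  rw [this]; ring
end

section
/- For the two-point space 𝓗 = {0, 1}, let p assign mass α to 0 and q assign mass β to 0, with α ≠ β. Then there exists a function C : 𝓗 → ℝ such that E_p[f(C − m_q)] + E_q[f(m_p − C)] > 0, where m_p = E_p[C], m_q = E_q[C], f(x) = log σ(x) + log 2, and σ is the logistic sigmoid. Hence the relativistic average divergence strictly separates distinct Bernoulli distributions. -/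
noncomputable def f (x : ℝ) : ℝ := Real.log (sigm x) + Real.log 2

/-!
Take the critic `C = ![t, 0]`. The objective is then a smooth function of `t` vanishing at
`t = 0` (as `f 0 = 0`), and since `f' 0 = σ 0 = 1/2` its derivative there is `α - β ≠ 0`.
A function with nonzero derivative at a point has no local maximum there, so the objective
is positive for some `t`.
-/

open Real

lemma f_eq_log_two_sub (x : ℝ) : f x = log 2 - log (1 + exp (-x)) := by
  rw [f, sigm, one_div, log_inv]
  ring

lemma f_zero : f 0 = 0 := by
  simp [f_eq_log_two_sub, one_add_one_eq_two]

lemma hasDerivAt_f (x : ℝ) : HasDerivAt f (sigm (-x)) x := by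
  have hden : HasDerivAt (fun y ↦ 1 + exp (-y)) (-exp (-x)) x := by
    simpa using (hasDerivAt_neg x).exp.const_add 1
  rw [funext f_eq_log_two_sub]
  refine ((hasDerivAt_const x (log 2)).sub (hden.log (by positivity))).congr_deriv ?_
  rw [sigm, neg_neg, exp_neg]
  field_simp
  ring

lemma hasDerivAt_f_const_mul_zero (c : ℝ) : HasDerivAt (fun t ↦ f (c * t)) (c / 2) 0 := by
  refine ((hasDerivAt_f (c * 0)).comp 0 ((hasDerivAt_id 0).const_mul c)).congr_deriv ?_
  norm_num [sigm]
  ring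

lemma exists_lt_of_hasDerivAt_ne_zero {g : ℝ → ℝ} {c a : ℝ} (hg : HasDerivAt g c a)
    (hc : c ≠ 0) : ∃ t, g a < g t := by
  by_contra! h
  exact hc (IsLocalMax.hasDerivAt_eq_zero (Filter.Eventually.of_forall h) hg)

theorem raGAN_separates_bernoulli_general
    (α β : ℝ)
    (hne : α ≠ β) :
    ∃ C : Fin 2 → ℝ,
      0 <
        (α * f (C 0 - (β * C 0 + (1 - β) * C 1)) +
          (1 - α) * f (C 1 - (β * C 0 + (1 - β) * C 1))) +
        (β * f ((α * C 0 + (1 - α) * C 1) - C 0) +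
          (1 - β) * f ((α * C 0 + (1 - α) * C 1) - C 1)) := by
  set g : ℝ → ℝ := fun t ↦
    (α * f ((1 - β) * t) + (1 - α) * f (-β * t)) + (β * f ((α - 1) * t) + (1 - β) * f (α * t))
  have hg : HasDerivAt g (α - β) 0 := by
    refine ((((hasDerivAt_f_const_mul_zero _).const_mul α).add
      ((hasDerivAt_f_const_mul_zero _).const_mul (1 - α))).add
      (((hasDerivAt_f_const_mul_zero _).const_mul β).add
      ((hasDerivAt_f_const_mul_zero _).const_mul (1 - β)))).congr_deriv ?_
    ring
  have hg0 : g 0 = 0 := by simp [g, f_zero]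
  obtain ⟨t, ht⟩ := exists_lt_of_hasDerivAt_ne_zero hg (sub_ne_zero.mpr hne)
  rw [hg0] at ht
  refine ⟨![t, 0], ht.trans_eq ?_⟩
  simp only [g, Matrix.cons_val_zero, Matrix.cons_val_one, Matrix.cons_val_fin_one]
  ring_nf

theorem raGAN_separates_bernoulli
    (α β : ℝ) (hα : α ∈ Set.Icc (0 : ℝ) 1) (hβ : β ∈ Set.Icc (0 : ℝ) 1)
    (hne : α ≠ β) :
    ∃ C : Fin 2 → ℝ,
      0 <
        (α * f (C 0 - (β * C 0 + (1 - β) * C 1)) +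
          (1 - α) * f (C 1 - (β * C 0 + (1 - β) * C 1))) +
        (β * f ((α * C 0 + (1 - α) * C 1) - C 0) +
          (1 - β) * f ((α * C 0 + (1 - α) * C 1) - C 1)) :=
  raGAN_separates_bernoulli_general α β hne
end
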